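/- Let V be a normed space and let C be a finite index set. For each c ∈ C let V_c be equipped with a seminorm ‖·‖_c, and let u, ũ, u' ∈ V with component restrictions u_c, ũ_c, u'_c satisfying ‖u_c - u'_c‖_c ≤ η_c ‖u_c - ũ_c‖_c with 0 ≤ η_c < 1 for every c ∈ C. If moreover ‖u - ũ‖ ≤ ∑_{c∈C} ‖u_c - ũ_c‖_c (subadditivity of the global norm over components), then ‖u - ũ‖ ≤ ∑_{c∈C} (1 - η_c)⁻¹ ‖u'_c - ũ_c‖_c. -/

import Mathlib

/-! A posteriori bound: since the refinement `u'` contracts the error of `ũ` by a factor `η < 1`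
on each component, the triangle inequality through `u'` gives
`(1 - η) ‖u_c - ũ_c‖ ≤ ‖u'_c - ũ_c‖`, a bound computable from reduced solutions alone;
summing over components and using the subadditivity of the global norm concludes. -/

theorem dist_le_inv_one_sub_mul_dist_of_dist_le_mul {X : Type*} [PseudoMetricSpace X]
    {x y z : X} {η : ℝ} (hη : η < 1) (h : dist x z ≤ η * dist x y) :
    dist x y ≤ (1 - η)⁻¹ * dist z y := by
  have htri : dist x y ≤ dist x z + dist z y := dist_triangle x z y
  rw [inv_mul_eq_div, le_div_iff₀ (sub_pos.mpr hη)]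
  linarith

theorem stmt_1_general {V : Type*} [NormedAddCommGroup V] {ι : Type*} (C : Finset ι)
    (Vc : ι → Type*) [∀ c, SeminormedAddCommGroup (Vc c)]
    (u utilde : V) (uc utildec u'c : ∀ c, Vc c) (η : ι → ℝ)
    (hη1 : ∀ c ∈ C, η c < 1)
    (hcontr : ∀ c ∈ C, ‖uc c - u'c c‖ ≤ η c * ‖uc c - utildec c‖)
    (hsub : ‖u - utilde‖ ≤ ∑ c ∈ C, ‖uc c - utildec c‖) :
    ‖u - utilde‖ ≤ ∑ c ∈ C, (1 - η c)⁻¹ * ‖u'c c - utildec c‖ := by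
  refine hsub.trans (Finset.sum_le_sum fun c hc => ?_)
  simp only [← dist_eq_norm] at hcontr ⊢
  exact dist_le_inv_one_sub_mul_dist_of_dist_le_mul (hη1 c hc) (hcontr c hc)

theorem stmt_1 {V : Type*} [NormedAddCommGroup V] {ι : Type*} (C : Finset ι)
    (Vc : ι → Type*) [∀ c, SeminormedAddCommGroup (Vc c)]
    (u utilde u' : V) (uc utildec u'c : ∀ c, Vc c) (η : ι → ℝ)
    (hη0 : ∀ c ∈ C, 0 ≤ η c) (hη1 : ∀ c ∈ C, η c < 1)
    (hcontr : ∀ c ∈ C, ‖uc c - u'c c‖ ≤ η c * ‖uc c - utildec c‖)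
    (hsub : ‖u - utilde‖ ≤ ∑ c ∈ C, ‖uc c - utildec c‖) :
    ‖u - utilde‖ ≤ ∑ c ∈ C, (1 - η c)⁻¹ * ‖u'c c - utildec c‖ :=
  stmt_1_general C Vc u utilde uc utildec u'c η hη1 hcontr hsub
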